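/- arXiv:2308.05668 — 2 statements merged into one kernel-verified Lean document; each statement's English description precedes it below -/
import Mathlib

section
/- Let $(\Omega,\mathcal{F},\{\mathcal{F}_t\},\mathbb{P})$ be a filtered probability space and $Y=\{Y_t\}_{t\ge 0}$ an adapted integrable process. A stopping time $\tau$ maximizes $\mathbb{E}[Y_\tau]$ over all stopping times if and only if: (i) for all stopping times $\tau' \le \tau$, $\mathbb{E}[Y_\tau \mid \mathcal{F}_{\tau'}] \ge \mathbb{E}[Y_{\tau'} \mid \mathcal{F}_{\tau'}]$ a.s., and (ii) for all stopping times $\tau' \ge \tau$, $\mathbb{E}[Y_\tau \mid \mathcal{F}_\tau] \ge \mathbb{E}[Y_{\tau'} \mid \mathcal{F}_\tau]$ a.s. -/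
/-!
Optimality of `τ` says that switching from `τ` to another stopping time on an event can never
increase `𝔼[Y]`. If `σ ≤ τ` and `A ∈ ℱ_σ`, or `τ ≤ σ` and `A ∈ ℱ_τ`, the time equal to `σ` on `A`
and to `τ` off `A` is again a stopping time, so `∫_A Y_σ ≤ ∫_A Y_τ` for every such `A`, which is
the conditional inequality. Conversely, any stopping time `σ` equals `σ ⊓ τ` on `B = {σ ≤ τ}` and
`σ ⊔ τ` off `B`, and `B` lies in both `ℱ_{σ ⊓ τ}` and `ℱ_τ`; integrating (i) for `σ ⊓ τ` over `B`
and (ii) for `σ ⊔ τ` over `Bᶜ` gives `𝔼[Y_σ] ≤ 𝔼[Y_τ]`.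
-/

open MeasureTheory

theorem WithTop.coe_piecewise {α β : Type*} (s : Set α) [DecidablePred (· ∈ s)] (f g : α → β) :
    (fun x => ((s.piecewise f g x : β) : WithTop β)) =
      s.piecewise (fun x => (f x : WithTop β)) (fun x => (g x : WithTop β)) :=
  funext fun _ => Set.apply_piecewise s f g (fun _ b => (b : WithTop β))

namespace MeasureTheory

variable {α : Type*} {m m₀ : MeasurableSpace α} {μ : Measure α}

theorem condExp_ae_le_condExp_iff_forall_setIntegral_le (hm : m ≤ m₀) [SigmaFinite (μ.trim hm)]
    {f g : α → ℝ} (hf : Integrable f μ) (hg : Integrable g μ) :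
    μ[f|m] ≤ᵐ[μ] μ[g|m] ↔
      ∀ s, MeasurableSet[m] s → ∫ x in s, f x ∂μ ≤ ∫ x in s, g x ∂μ := by
  constructor
  · intro hfg s hs
    rw [← setIntegral_condExp hm hf hs, ← setIntegral_condExp hm hg hs]
    exact setIntegral_mono_ae integrable_condExp.integrableOn integrable_condExp.integrableOn hfg
  · intro hfg
    refine ae_le_of_ae_le_trim (hm := hm) (ae_le_of_forall_setIntegral_le
      (integrable_condExp.trim hm stronglyMeasurable_condExp)
      (integrable_condExp.trim hm stronglyMeasurable_condExp) fun s hs _ => ?_)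
    rw [← setIntegral_trim hm stronglyMeasurable_condExp hs,
      ← setIntegral_trim hm stronglyMeasurable_condExp hs,
      setIntegral_condExp hm hf hs, setIntegral_condExp hm hg hs]
    exact hfg s hs

theorem setIntegral_le_of_integral_piecewise_le {s : Set α} [DecidablePred (· ∈ s)]
    (hs : MeasurableSet s) {f g : α → ℝ} (hf : Integrable f μ) (hg : Integrable g μ)
    (h : ∫ x, s.piecewise f g x ∂μ ≤ ∫ x, g x ∂μ) :
    ∫ x in s, f x ∂μ ≤ ∫ x in s, g x ∂μ := by
  rw [integral_piecewise hs hf.integrableOn hg.integrableOn, ← integral_add_compl hs hg] at h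
  linarith

open Classical in
theorem condExp_ae_le_condExp_of_forall_integral_piecewise_le (hm : m ≤ m₀)
    [SigmaFinite (μ.trim hm)] {f g : α → ℝ} (hf : Integrable f μ) (hg : Integrable g μ)
    (h : ∀ s, MeasurableSet[m] s → ∫ x, s.piecewise f g x ∂μ ≤ ∫ x, g x ∂μ) :
    μ[f|m] ≤ᵐ[μ] μ[g|m] :=
  (condExp_ae_le_condExp_iff_forall_setIntegral_le hm hf hg).2 fun s hs =>
    setIntegral_le_of_integral_piecewise_le (hm s hs) hf hg (h s hs)

namespace IsStoppingTime

theorem piecewise_of_le_of_measurableSet {Ω ι : Type*} {m : MeasurableSpace Ω} [Preorder ι]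
    {ℱ : Filtration ι m} {τ η : Ω → WithTop ι}
    (hτ : IsStoppingTime ℱ τ) (hη : IsStoppingTime ℱ η) (hle : ∀ ω, τ ω ≤ η ω)
    {s : Set Ω} [DecidablePred (· ∈ s)] (hs : MeasurableSet[hτ.measurableSpace] s) :
    IsStoppingTime ℱ (s.piecewise τ η) := by
  intro i
  have : {ω | s.piecewise τ η ω ≤ i} =
      s ∩ {ω | τ ω ≤ i} ∪ sᶜ ∩ {ω | τ ω ≤ i} ∩ {ω | η ω ≤ i} := by
    ext ω
    by_cases hω : ω ∈ s <;> simp [hω]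
    exact (hle ω).trans
  rw [this]
  exact (((hτ.measurableSet s).1 hs).2 i).union
    ((((hτ.measurableSet sᶜ).1 hs.compl).2 i).inter (hη i))

end IsStoppingTime

section OptimalStopping

variable {Ω : Type*} {m : MeasurableSpace Ω} {μ : Measure Ω} [IsFiniteMeasure μ]
  {ℱ : Filtration ℝ m} {Y : ℝ → Ω → ℝ}

open Classical in
theorem condExp_stopped_le_of_forall_integral_stopped_le
    (hint : ∀ σ : Ω → ℝ, IsStoppingTime ℱ (fun ω => (σ ω : WithTop ℝ)) →
      Integrable (fun ω => Y (σ ω) ω) μ)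
    {τ σ π : Ω → ℝ} (hτ : IsStoppingTime ℱ (fun ω => (τ ω : WithTop ℝ)))
    (hσ : IsStoppingTime ℱ (fun ω => (σ ω : WithTop ℝ)))
    (hπ : IsStoppingTime ℱ (fun ω => (π ω : WithTop ℝ)))
    (hopt : ∀ ρ : Ω → ℝ, IsStoppingTime ℱ (fun ω => (ρ ω : WithTop ℝ)) →
      ∫ ω, Y (ρ ω) ω ∂μ ≤ ∫ ω, Y (τ ω) ω ∂μ)
    (hpaste : ∀ s, MeasurableSet[hπ.measurableSpace] s →
      IsStoppingTime ℱ (fun ω => ((s.piecewise σ τ ω : ℝ) : WithTop ℝ))) :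
    μ[fun ω => Y (σ ω) ω|hπ.measurableSpace] ≤ᵐ[μ] μ[fun ω => Y (τ ω) ω|hπ.measurableSpace] := by
  refine condExp_ae_le_condExp_of_forall_integral_piecewise_le hπ.measurableSpace_le
    (hint σ hσ) (hint τ hτ) fun s hs => ?_
  have hY : (fun ω => Y (s.piecewise σ τ ω) ω) =
      s.piecewise (fun ω => Y (σ ω) ω) (fun ω => Y (τ ω) ω) :=
    funext fun _ => Set.apply_piecewise s σ τ (fun ω t => Y t ω)
  simpa only [hY] using hopt _ (hpaste s hs)

theorem integral_stopped_le_of_condExp_stopped_le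
    (hint : ∀ σ : Ω → ℝ, IsStoppingTime ℱ (fun ω => (σ ω : WithTop ℝ)) →
      Integrable (fun ω => Y (σ ω) ω) μ)
    {τ : Ω → ℝ} (hτ : IsStoppingTime ℱ (fun ω => (τ ω : WithTop ℝ)))
    (hbelow : ∀ (σ : Ω → ℝ) (hσ : IsStoppingTime ℱ (fun ω => (σ ω : WithTop ℝ))),
      (∀ ω, σ ω ≤ τ ω) →
        μ[fun ω => Y (σ ω) ω|hσ.measurableSpace] ≤ᵐ[μ] μ[fun ω => Y (τ ω) ω|hσ.measurableSpace])
    (habove : ∀ σ : Ω → ℝ, IsStoppingTime ℱ (fun ω => (σ ω : WithTop ℝ)) → (∀ ω, τ ω ≤ σ ω) →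
        μ[fun ω => Y (σ ω) ω|hτ.measurableSpace] ≤ᵐ[μ] μ[fun ω => Y (τ ω) ω|hτ.measurableSpace])
    {σ : Ω → ℝ} (hσ : IsStoppingTime ℱ (fun ω => (σ ω : WithTop ℝ))) :
    ∫ ω, Y (σ ω) ω ∂μ ≤ ∫ ω, Y (τ ω) ω ∂μ := by
  set B := {ω | σ ω ≤ τ ω}
  have hmin : IsStoppingTime ℱ fun ω => ((min (σ ω) (τ ω) : ℝ) : WithTop ℝ) := by
    simpa only [WithTop.coe_min] using hσ.min hτ
  have hmax : IsStoppingTime ℱ fun ω => ((max (σ ω) (τ ω) : ℝ) : WithTop ℝ) := by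
    simpa only [WithTop.coe_max] using hσ.max hτ
  have hB_min : MeasurableSet[hmin.measurableSpace] B := by
    simpa [B] using hmin.measurableSet_eq_stopping_time hσ
  have hB_τ : MeasurableSet[hτ.measurableSpace] B := by
    simpa [B] using hσ.measurableSet_stopping_time_le hτ
  have hB : MeasurableSet B := hτ.measurableSpace_le _ hB_τ
  have on_B : ∫ ω in B, Y (σ ω) ω ∂μ ≤ ∫ ω in B, Y (τ ω) ω ∂μ := by
    have h := (condExp_ae_le_condExp_iff_forall_setIntegral_le hmin.measurableSpace_le
      (hint _ hmin) (hint τ hτ)).1 (hbelow _ hmin fun ω => min_le_right _ _) B hB_min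
    calc ∫ ω in B, Y (σ ω) ω ∂μ = ∫ ω in B, Y (min (σ ω) (τ ω)) ω ∂μ :=
          setIntegral_congr_fun hB fun ω hω => by rw [min_eq_left hω]
      _ ≤ _ := h
  have on_Bc : ∫ ω in Bᶜ, Y (σ ω) ω ∂μ ≤ ∫ ω in Bᶜ, Y (τ ω) ω ∂μ := by
    have h := (condExp_ae_le_condExp_iff_forall_setIntegral_le hτ.measurableSpace_le
      (hint _ hmax) (hint τ hτ)).1 (habove _ hmax fun ω => le_max_right _ _) Bᶜ hB_τ.compl
    calc ∫ ω in Bᶜ, Y (σ ω) ω ∂μ = ∫ ω in Bᶜ, Y (max (σ ω) (τ ω)) ω ∂μ :=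
          setIntegral_congr_fun hB.compl fun ω (hω : ¬σ ω ≤ τ ω) => by
            rw [max_eq_left (not_le.1 hω).le]
      _ ≤ _ := h
  calc ∫ ω, Y (σ ω) ω ∂μ = ∫ ω in B, Y (σ ω) ω ∂μ + ∫ ω in Bᶜ, Y (σ ω) ω ∂μ :=
        (integral_add_compl hB (hint σ hσ)).symm
    _ ≤ ∫ ω in B, Y (τ ω) ω ∂μ + ∫ ω in Bᶜ, Y (τ ω) ω ∂μ := add_le_add on_B on_Bc
    _ = ∫ ω, Y (τ ω) ω ∂μ := integral_add_compl hB (hint τ hτ)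

end OptimalStopping

end MeasureTheory

theorem stmt_0_general {Ω : Type*} {m : MeasurableSpace Ω} {μ : Measure Ω} [IsProbabilityMeasure μ]
    (ℱ : Filtration ℝ m) (Y : ℝ → Ω → ℝ)
    (hint : ∀ σ : Ω → ℝ, IsStoppingTime ℱ (fun ω => (σ ω : WithTop ℝ)) → Integrable (fun ω => Y (σ ω) ω) μ)
    (τ : Ω → ℝ) (hτ : IsStoppingTime ℱ (fun ω => (τ ω : WithTop ℝ))) :
    (∀ σ : Ω → ℝ, IsStoppingTime ℱ (fun ω => (σ ω : WithTop ℝ)) →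
        ∫ ω, Y (σ ω) ω ∂μ ≤ ∫ ω, Y (τ ω) ω ∂μ) ↔
      ((∀ (σ : Ω → ℝ) (hσ : IsStoppingTime ℱ (fun ω => (σ ω : WithTop ℝ))), (∀ ω, σ ω ≤ τ ω) →
          μ[fun ω => Y (σ ω) ω|hσ.measurableSpace]
            ≤ᵐ[μ] μ[fun ω => Y (τ ω) ω|hσ.measurableSpace]) ∧
        (∀ (σ : Ω → ℝ), IsStoppingTime ℱ (fun ω => (σ ω : WithTop ℝ)) → (∀ ω, τ ω ≤ σ ω) →
          μ[fun ω => Y (σ ω) ω|hτ.measurableSpace]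
            ≤ᵐ[μ] μ[fun ω => Y (τ ω) ω|hτ.measurableSpace])) := by
  classical
  refine ⟨fun hopt => ⟨fun σ hσ hle => ?_, fun σ hσ hle => ?_⟩,
    fun h σ hσ => integral_stopped_le_of_condExp_stopped_le hint hτ h.1 h.2 hσ⟩
  · refine condExp_stopped_le_of_forall_integral_stopped_le hint hτ hσ hσ hopt fun s hs => ?_
    rw [WithTop.coe_piecewise]
    exact hσ.piecewise_of_le_of_measurableSet hτ (fun ω => WithTop.coe_le_coe.2 (hle ω)) hs
  · refine condExp_stopped_le_of_forall_integral_stopped_le hint hτ hσ hτ hopt fun s hs => ?_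
    rw [WithTop.coe_piecewise, ← Set.piecewise_compl]
    exact hτ.piecewise_of_le_of_measurableSet hσ (fun ω => WithTop.coe_le_coe.2 (hle ω)) hs.compl

/-- A stopping time `τ` maximizes `𝔼[Y_τ]` over all stopping times iff
(i) for every stopping time `σ ≤ τ`, `𝔼[Y_τ ∣ ℱ_σ] ≥ 𝔼[Y_σ ∣ ℱ_σ]` a.s., and
(ii) for every stopping time `σ ≥ τ`, `𝔼[Y_τ ∣ ℱ_τ] ≥ 𝔼[Y_σ ∣ ℱ_τ]` a.s. -/
theorem stmt_0 {Ω : Type*} {m : MeasurableSpace Ω} {μ : Measure Ω} [IsProbabilityMeasure μ]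
    (ℱ : Filtration ℝ m) (Y : ℝ → Ω → ℝ)
    (hadp : Adapted ℱ Y)
    (hint : ∀ σ : Ω → ℝ, IsStoppingTime ℱ (fun ω => (σ ω : WithTop ℝ)) → Integrable (fun ω => Y (σ ω) ω) μ)
    (τ : Ω → ℝ) (hτ : IsStoppingTime ℱ (fun ω => (τ ω : WithTop ℝ))) :
    (∀ σ : Ω → ℝ, IsStoppingTime ℱ (fun ω => (σ ω : WithTop ℝ)) →
        ∫ ω, Y (σ ω) ω ∂μ ≤ ∫ ω, Y (τ ω) ω ∂μ) ↔
      ((∀ (σ : Ω → ℝ) (hσ : IsStoppingTime ℱ (fun ω => (σ ω : WithTop ℝ))), (∀ ω, σ ω ≤ τ ω) →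
          μ[fun ω => Y (σ ω) ω|hσ.measurableSpace]
            ≤ᵐ[μ] μ[fun ω => Y (τ ω) ω|hσ.measurableSpace]) ∧
        (∀ (σ : Ω → ℝ), IsStoppingTime ℱ (fun ω => (σ ω : WithTop ℝ)) → (∀ ω, τ ω ≤ σ ω) →
          μ[fun ω => Y (σ ω) ω|hτ.measurableSpace]
            ≤ᵐ[μ] μ[fun ω => Y (τ ω) ω|hτ.measurableSpace])) :=
  stmt_0_general ℱ Y hint τ hτ
end

section
/- Let $\underline\Gamma^1, \dots, \underline\Gamma^N$ be nonincreasing right-continuous nonnegative paths, let $W \ge 0$, and let $T$ be any optional increasing path (allocation) with $\sum_i (T^i(t) - T^i(u)) \le t - u$. Then $\int_0^\infty r e^{-rt} \sum_{i=1}^N \underline\Gamma^i_{T^i(t)}\,dT^i(t) \le \int_0^\infty r e^{-rt} \bigvee_{i=1}^N \underline\Gamma^i_{T^i(t)}\,dt$, with equality when $T$ is an index rule (each $T^i$ increases only where $\underline\Gamma^i_{T^i(t)} = \bigvee_j \underline\Gamma^j_{T^j(t)}$) and $\sum_i dT^i(t) = dt$. -/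
/-!
Speed at most one says exactly that `t ↦ max t 0 - ∑ i, T i t` is nondecreasing, so the Stieltjes
measure of `∑ i, T i` is dominated by that of the ramp `max t 0`, which is Lebesgue measure on
`(0, ∞)`; at full speed the two coincide. Bounding each `Γ̲^i(T^i(t))` by the envelope
`⋁_j Γ̲^j(T^j(t))`, and integrating the discounted envelope (antitone and nonnegative, hence
integrable) against these measures, gives the inequality. Under an index rule the first bound is a
`dT^i`-a.e. equality, and full speed makes the comparison of measures an equality.
-/

open MeasureTheory Set

theorem apply_max_zero_eq_apply {f : ℝ → ℝ} (h0 : ∀ t ≤ 0, f t = 0) (t : ℝ) :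
    f (max t 0) = f t := by
  rcases le_total t 0 with ht | ht
  · rw [max_eq_right ht, h0 0 le_rfl, h0 t ht]
  · rw [max_eq_left ht]

theorem monotone_max_zero_sub {f : ℝ → ℝ} (h0 : ∀ t ≤ 0, f t = 0)
    (hspeed : ∀ u t, 0 ≤ u → u ≤ t → f t - f u ≤ t - u) : Monotone fun t => max t 0 - f t := by
  intro u t hut
  have := hspeed (max u 0) (max t 0) (le_max_right u 0) (max_le_max hut le_rfl)
  rw [apply_max_zero_eq_apply h0, apply_max_zero_eq_apply h0] at this
  linarith

theorem eq_max_zero_of_sub_eq {f : ℝ → ℝ} (h0 : ∀ t ≤ 0, f t = 0)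
    (hspeed : ∀ u t, 0 ≤ u → u ≤ t → f t - f u = t - u) (t : ℝ) : f t = max t 0 := by
  have := hspeed 0 (max t 0) le_rfl (le_max_right t 0)
  rwa [apply_max_zero_eq_apply h0, h0 0 le_rfl, sub_zero, sub_zero] at this

namespace StieltjesFunction

section Measure

variable {R ι : Type*} [LinearOrder R] [TopologicalSpace R]

theorem finsetSum_apply (s : Finset ι) (f : ι → StieltjesFunction R) (x : R) :
    (∑ i ∈ s, f i) x = ∑ i ∈ s, f i x :=
  map_sum (⟨⟨fun g => g x, rfl⟩, fun _ _ => rfl⟩ : StieltjesFunction R →+ ℝ) f s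

variable [OrderTopology R] [CompactIccSpace R] [MeasurableSpace R] [BorelSpace R]
  [SecondCountableTopology R] [DenselyOrdered R]

theorem measure_finsetSum (s : Finset ι) (f : ι → StieltjesFunction R) :
    (∑ i ∈ s, f i).measure = ∑ i ∈ s, (f i).measure := by
  induction s using Finset.cons_induction with
  | empty => simp
  | cons i s hi ih => rw [Finset.sum_cons, Finset.sum_cons, measure_add, ih]

theorem measure_le_of_monotone_sub {f g : StieltjesFunction R} (h : Monotone (⇑g - ⇑f)) :
    f.measure ≤ g.measure := by
  let d : StieltjesFunction R :=
    ⟨⇑g - ⇑f, h, fun x => (g.right_continuous x).sub (f.right_continuous x)⟩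
  have hg : g = f + d := by ext x; simp [d]
  rw [hg, measure_add]
  exact Measure.le_add_right le_rfl

end Measure

protected noncomputable def ramp : StieltjesFunction ℝ where
  toFun t := max t 0
  mono' _ _ h := max_le_max h le_rfl
  right_continuous' _ := (continuous_id.max continuous_const).continuousWithinAt

theorem ramp_apply (t : ℝ) : StieltjesFunction.ramp t = max t 0 := rfl

theorem measure_ramp : StieltjesFunction.ramp.measure = volume.restrict (Ioi 0) := by
  refine Measure.ext_of_Ioc _ _ fun a b _ => ?_
  rw [measure_Ioc, Measure.restrict_apply measurableSet_Ioc, Ioc_inter_Ioi, Real.volume_Ioc,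
    ramp_apply, ramp_apply]
  rcases le_total b 0 with hb | hb
  · rw [max_eq_right hb, ENNReal.ofReal_of_nonpos (by simp),
      ENNReal.ofReal_of_nonpos (by linarith [le_max_right a 0])]
  · rw [max_eq_left hb]

theorem measure_le_volume_Ioi {f : StieltjesFunction ℝ} (h0 : ∀ t ≤ 0, f t = 0)
    (hspeed : ∀ u t, 0 ≤ u → u ≤ t → f t - f u ≤ t - u) :
    f.measure ≤ volume.restrict (Ioi 0) := by
  rw [← measure_ramp]
  exact measure_le_of_monotone_sub (monotone_max_zero_sub h0 hspeed)

theorem measure_eq_volume_Ioi {f : StieltjesFunction ℝ} (h0 : ∀ t ≤ 0, f t = 0)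
    (hspeed : ∀ u t, 0 ≤ u → u ≤ t → f t - f u = t - u) :
    f.measure = volume.restrict (Ioi 0) := by
  rw [← measure_ramp]
  congr
  ext t
  exact eq_max_zero_of_sub_eq h0 hspeed t

section Allocation

variable {ι : Type*} [Fintype ι] {T : ι → StieltjesFunction ℝ}

theorem sum_measure_restrict (s : Set ℝ) :
    ∑ i, (T i).measure.restrict s = (∑ i, T i).measure.restrict s := by
  simp only [measure_finsetSum, ← Measure.restrictₗ_apply, map_sum]

theorem sum_apply_eq_zero (hT0 : ∀ i t, t ≤ 0 → T i t = 0) {t : ℝ} (ht : t ≤ 0) :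
    (∑ i, T i) t = 0 := by
  simp only [finsetSum_apply, hT0 _ t ht, Finset.sum_const_zero]

theorem sum_measure_restrict_Ioi_le (hT0 : ∀ i t, t ≤ 0 → T i t = 0)
    (hspeed : ∀ u t, 0 ≤ u → u ≤ t → ∑ i, (T i t - T i u) ≤ t - u) :
    ∑ i, (T i).measure.restrict (Ioi 0) ≤ volume.restrict (Ioi 0) := by
  rw [sum_measure_restrict]
  refine Measure.restrict_le_self.trans
    (measure_le_volume_Ioi (fun t => sum_apply_eq_zero hT0) fun u t hu hut => ?_)
  simpa only [finsetSum_apply, Finset.sum_sub_distrib] using hspeed u t hu hut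

theorem sum_measure_restrict_Ioi_eq (hT0 : ∀ i t, t ≤ 0 → T i t = 0)
    (hspeed : ∀ u t, 0 ≤ u → u ≤ t → ∑ i, (T i t - T i u) = t - u) :
    ∑ i, (T i).measure.restrict (Ioi 0) = volume.restrict (Ioi 0) := by
  rw [sum_measure_restrict, measure_eq_volume_Ioi (fun t => sum_apply_eq_zero hT0)
    fun u t hu hut => ?_, Measure.restrict_restrict_of_subset subset_rfl]
  simpa only [finsetSum_apply, Finset.sum_sub_distrib] using hspeed u t hu hut

end Allocation

end StieltjesFunction

section IntegralComparison

variable {α ι : Type*} [MeasurableSpace α] {s : Finset ι} {μ : ι → Measure α} {ν : Measure α}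
  {g : ι → α → ℝ} {F : α → ℝ}

theorem sum_integral_le_integral_of_sum_le (hμν : ∑ i ∈ s, μ i ≤ ν) (hg : ∀ i, 0 ≤ g i)
    (hgF : ∀ i, g i ≤ F) (hF0 : 0 ≤ F) (hF : Integrable F ν) :
    ∑ i ∈ s, ∫ x, g i x ∂μ i ≤ ∫ x, F x ∂ν := by
  have hFμ : ∀ i ∈ s, Integrable F (μ i) := fun i hi =>
    hF.mono_measure ((Finset.single_le_sum (fun j _ => Measure.zero_le (μ j)) hi).trans hμν)
  calc ∑ i ∈ s, ∫ x, g i x ∂μ i ≤ ∑ i ∈ s, ∫ x, F x ∂μ i :=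
        Finset.sum_le_sum fun i hi =>
          integral_mono_of_nonneg (.of_forall (hg i)) (hFμ i hi) (.of_forall (hgF i))
    _ = ∫ x, F x ∂(∑ i ∈ s, μ i) := (integral_finsetSum_measure hFμ).symm
    _ ≤ ∫ x, F x ∂ν := integral_mono_measure hμν (.of_forall hF0) hF

theorem sum_integral_eq_integral_of_sum_eq (hμν : ∑ i ∈ s, μ i = ν)
    (hgF : ∀ i ∈ s, g i =ᵐ[μ i] F) (hF : Integrable F ν) :
    ∑ i ∈ s, ∫ x, g i x ∂μ i = ∫ x, F x ∂ν := by
  subst hμν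
  rw [integral_finsetSum_measure fun i hi => hF.mono_measure
    (Finset.single_le_sum (fun j _ => Measure.zero_le (μ j)) hi)]
  exact Finset.sum_congr rfl fun i hi => integral_congr_ae (hgF i hi)

theorem ae_restrict_eq_of_measure_setOf_lt_eq_zero {μ : Measure α} {t : Set α}
    (ht : MeasurableSet t) {f h : α → ℝ} (hfh : ∀ x, f x ≤ h x)
    (hnull : μ {x | x ∈ t ∧ f x < h x} = 0) : f =ᵐ[μ.restrict t] h := by
  rw [Filter.EventuallyEq, ae_restrict_iff' ht]
  refine ae_iff.mpr (measure_mono_null (fun x hx => ?_) hnull)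
  obtain ⟨hxt, hne⟩ := Classical.not_imp.mp hx
  exact ⟨hxt, (hfh x).lt_of_ne hne⟩

end IntegralComparison

theorem antitone_iSup_comp {ι : Type*} [Finite ι] {Γ T : ι → ℝ → ℝ}
    (hΓ : ∀ i, AntitoneOn (Γ i) (Ici 0)) (hT : ∀ i, Monotone (T i)) (hT0 : ∀ i t, 0 ≤ T i t) :
    Antitone fun t => ⨆ i, Γ i (T i t) := fun _ _ hst =>
  ciSup_mono (Finite.bddAbove_range _) fun i => hΓ i (hT0 i _) (hT0 i _) (hT i hst)

theorem integrableOn_mul_exp_neg_mul_of_antitone {G : ℝ → ℝ} (hG : Antitone G)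
    (hG0 : ∀ t, 0 ≤ G t) {r : ℝ} (hr : 0 < r) :
    IntegrableOn (fun t => r * Real.exp (-r * t) * G t) (Ioi 0) := by
  refine ((exp_neg_integrableOn_Ioi 0 hr).const_mul r).mul_bdd (c := G 0)
    hG.measurable.aestronglyMeasurable ?_
  filter_upwards [self_mem_ae_restrict measurableSet_Ioi] with t ht
  rw [Real.norm_eq_abs, abs_of_nonneg (hG0 t)]
  exact hG (le_of_lt ht)

theorem stmt_14_general (N : ℕ) (r : ℝ) (hr : 0 < r)
    (Γmin : Fin N → ℝ → ℝ)
    (hanti : ∀ i, AntitoneOn (Γmin i) (Set.Ici 0))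
    (hnn : ∀ (i : Fin N) (x : ℝ), 0 ≤ x → 0 ≤ Γmin i x)
    (T : Fin N → StieltjesFunction ℝ)
    (hT0 : ∀ (i : Fin N) (t : ℝ), t ≤ 0 → T i t = 0)
    (hspeed : ∀ u t : ℝ, 0 ≤ u → u ≤ t → ∑ i, ((T i) t - (T i) u) ≤ t - u) :
    (∑ i, ∫ t in Set.Ioi (0:ℝ), r * Real.exp (-r * t) * Γmin i ((T i) t) ∂((T i).measure))
      ≤ ∫ t in Set.Ioi (0:ℝ), r * Real.exp (-r * t) * (⨆ i, Γmin i ((T i) t)) ∧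
    (((∀ i : Fin N,
        (T i).measure {t : ℝ | 0 < t ∧ Γmin i ((T i) t) < ⨆ j, Γmin j ((T j) t)} = 0) ∧
      (∀ u t : ℝ, 0 ≤ u → u ≤ t → ∑ i, ((T i) t - (T i) u) = t - u)) →
      (∑ i, ∫ t in Set.Ioi (0:ℝ),
          r * Real.exp (-r * t) * Γmin i ((T i) t) ∂((T i).measure))
        = ∫ t in Set.Ioi (0:ℝ), r * Real.exp (-r * t) * (⨆ i, Γmin i ((T i) t))) := by
  have hTnn : ∀ i t, 0 ≤ T i t := fun i t => by
    have := (T i).mono (le_max_right t 0)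
    rwa [hT0 i 0 le_rfl, apply_max_zero_eq_apply (hT0 i)] at this
  have hΓle : ∀ i t, Γmin i (T i t) ≤ ⨆ j, Γmin j (T j t) := fun i t =>
    le_ciSup (f := fun j => Γmin j (T j t)) (Finite.bddAbove_range _) i
  have hG0 : ∀ t, 0 ≤ ⨆ i, Γmin i (T i t) := fun t =>
    Real.iSup_nonneg fun i => hnn i _ (hTnn i t)
  have hF := integrableOn_mul_exp_neg_mul_of_antitone
    (antitone_iSup_comp hanti (fun i => (T i).mono) hTnn) hG0 hr
  have hdisc : ∀ t : ℝ, 0 ≤ r * Real.exp (-r * t) := fun t => by positivity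
  refine ⟨sum_integral_le_integral_of_sum_le
      (StieltjesFunction.sum_measure_restrict_Ioi_le hT0 hspeed)
      (fun i t => mul_nonneg (hdisc t) (hnn i _ (hTnn i t)))
      (fun i t => mul_le_mul_of_nonneg_left (hΓle i t) (hdisc t))
      (fun t => mul_nonneg (hdisc t) (hG0 t)) hF,
    fun ⟨hindex, hfull⟩ => sum_integral_eq_integral_of_sum_eq
      (StieltjesFunction.sum_measure_restrict_Ioi_eq hT0 hfull) (fun i _ => ?_) hF⟩
  filter_upwards [ae_restrict_eq_of_measure_setOf_lt_eq_zero measurableSet_Ioi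
    (hΓle i) (hindex i)] with t ht
  rw [ht]

/-- Deterministic core of the bandit verification argument: for nonincreasing,
right-continuous, nonnegative index lower envelopes `Γ̲^i` and any optional
increasing path `T` with total speed at most one,
`∑_i ∫_0^∞ r e^{-rt} Γ̲^i(T^i(t)) dT^i(t) ≤ ∫_0^∞ r e^{-rt} ⋁_i Γ̲^i(T^i(t)) dt`,
with equality when `T` is an index rule run at full speed. -/
theorem stmt_14 (N : ℕ) (hN : 0 < N) (r : ℝ) (hr : 0 < r)
    (Γmin : Fin N → ℝ → ℝ)
    (hanti : ∀ i, AntitoneOn (Γmin i) (Set.Ici 0))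
    (hnn : ∀ (i : Fin N) (x : ℝ), 0 ≤ x → 0 ≤ Γmin i x)
    (hrc : ∀ (i : Fin N) (t : ℝ), 0 ≤ t → ContinuousWithinAt (Γmin i) (Set.Ici t) t)
    (T : Fin N → StieltjesFunction ℝ)
    (hT0 : ∀ (i : Fin N) (t : ℝ), t ≤ 0 → T i t = 0)
    (hspeed : ∀ u t : ℝ, 0 ≤ u → u ≤ t → ∑ i, ((T i) t - (T i) u) ≤ t - u) :
    (∑ i, ∫ t in Set.Ioi (0:ℝ), r * Real.exp (-r * t) * Γmin i ((T i) t) ∂((T i).measure))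
      ≤ ∫ t in Set.Ioi (0:ℝ), r * Real.exp (-r * t) * (⨆ i, Γmin i ((T i) t)) ∧
    (((∀ i : Fin N,
        (T i).measure {t : ℝ | 0 < t ∧ Γmin i ((T i) t) < ⨆ j, Γmin j ((T j) t)} = 0) ∧
      (∀ u t : ℝ, 0 ≤ u → u ≤ t → ∑ i, ((T i) t - (T i) u) = t - u)) →
      (∑ i, ∫ t in Set.Ioi (0:ℝ),
          r * Real.exp (-r * t) * Γmin i ((T i) t) ∂((T i).measure))
        = ∫ t in Set.Ioi (0:ℝ), r * Real.exp (-r * t) * (⨆ i, Γmin i ((T i) t))) :=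
  stmt_14_general N r hr Γmin hanti hnn T hT0 hspeed
end
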